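/- Let $1/2 \le \alpha \le 1$, $m \in \mathbb{N}$, $\lambda \in \Lambda_m$, and $v_i, t_i, v_*, t_* > 0$ for $i = 1,\dots,m$ with $\sum_i \lambda_i v_i = v_*$ and $\sum_i \lambda_i t_i^\alpha = t_*^\alpha$. Then $\sum_{i=1}^m \lambda_i \frac{v_i^2}{v_*^2} \left(\frac{t_i^\alpha}{t_*^\alpha}\right)^{1 - 1/\alpha} \ge 1$. -/
import Mathlib


open Finset

/-- Tangent-plane inequality for `h(x,y) = x² y^β` at `(1,1)`, for `β ∈ [-1,0]`. -/
lemma key_tangent {β x y : ℝ} (hβ0 : -1 ≤ β) (hβ1 : β ≤ 0) (hx : 0 < x) (hy : 0 < y) :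
    2 * x + β * y + (-1 - β) ≤ x ^ 2 * y ^ β := by
  have hyβ : (0:ℝ) < y ^ β := Real.rpow_pos_of_pos hy β
  have hynβ : (0:ℝ) < y ^ (-β) := Real.rpow_pos_of_pos hy (-β)
  -- Step 1: x² y^β ≥ 2x - y^(-β)
  have h1 : 2 * x - y ^ (-β) ≤ x ^ 2 * y ^ β := by
    have hsq : 0 ≤ y ^ β * (x - y ^ (-β)) ^ 2 := by positivity
    have hmul : y ^ β * y ^ (-β) = 1 := by
      rw [← Real.rpow_add hy]; simp
    have hmul2 : y ^ β * y ^ (-β) * y ^ (-β) = y ^ (-β) := by rw [hmul]; ring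
    nlinarith [hsq]
  -- Step 2: y^(-β) ≤ (-β) * y + (1 + β)  (Bernoulli / weighted AM-GM)
  have h2 : y ^ (-β) ≤ (-β) * y + (1 + β) := by
    have := Real.geom_mean_le_arith_mean2_weighted (by linarith : (0:ℝ) ≤ -β)
      (by linarith : (0:ℝ) ≤ 1 + β) hy.le (zero_le_one) (by ring)
    simpa using this
  linarith

/-- Jensen-type inequality: if `∑ λᵢ vᵢ = v⋆` and `∑ λᵢ tᵢ^α = t⋆^α` with `1/2 ≤ α ≤ 1`,
then `∑ λᵢ (vᵢ²/v⋆²)(tᵢ^α/t⋆^α)^(1-1/α) ≥ 1`. -/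
theorem jensen_sq_rpow (α : ℝ) (h₁ : 1 / 2 ≤ α) (h₂ : α ≤ 1) {m : ℕ}
    (lam v t : Fin m → ℝ)
    (hlam : ∀ i, lam i ∈ Set.Ioo (0 : ℝ) 1) (hsum : ∑ i, lam i = 1)
    (hv : ∀ i, 0 < v i) (ht : ∀ i, 0 < t i)
    (vstar tstar : ℝ) (hvs : 0 < vstar) (hts : 0 < tstar)
    (hveq : ∑ i, lam i * v i = vstar) (hteq : ∑ i, lam i * t i ^ α = tstar ^ α) :
    1 ≤ ∑ i, lam i * (v i ^ 2 / vstar ^ 2) * (t i ^ α / tstar ^ α) ^ (1 - 1 / α) := by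
  have hα0 : (0:ℝ) < α := by linarith
  set β : ℝ := 1 - 1 / α with hβ
  have hβ0 : -1 ≤ β := by
    have : 1 / α ≤ 2 := by
      rw [div_le_iff₀ hα0]; linarith
    simp only [hβ]; linarith
  have hβ1 : β ≤ 0 := by
    have : 1 ≤ 1 / α := by
      rw [le_div_iff₀ hα0]; linarith
    simp only [hβ]; linarith
  have hts' : (0:ℝ) < tstar ^ α := Real.rpow_pos_of_pos hts α
  have key : ∀ i, lam i * (2 * (v i / vstar) + β * (t i ^ α / tstar ^ α) + (-1 - β))
      ≤ lam i * (v i ^ 2 / vstar ^ 2) * (t i ^ α / tstar ^ α) ^ β := by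
    intro i
    have hxi : 0 < v i / vstar := div_pos (hv i) hvs
    have hyi : 0 < t i ^ α / tstar ^ α := div_pos (Real.rpow_pos_of_pos (ht i) α) hts'
    have := key_tangent hβ0 hβ1 hxi hyi
    have hli : 0 < lam i := (hlam i).1
    have heq : (v i / vstar) ^ 2 = v i ^ 2 / vstar ^ 2 := by rw [div_pow]
    calc lam i * (2 * (v i / vstar) + β * (t i ^ α / tstar ^ α) + (-1 - β))
        ≤ lam i * ((v i / vstar) ^ 2 * (t i ^ α / tstar ^ α) ^ β) :=
          mul_le_mul_of_nonneg_left this hli.le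
      _ = lam i * (v i ^ 2 / vstar ^ 2) * (t i ^ α / tstar ^ α) ^ β := by
          rw [heq]; ring
  have hsum2 : ∑ i, lam i * (2 * (v i / vstar) + β * (t i ^ α / tstar ^ α) + (-1 - β)) = 1 := by
    have e1 : ∑ i, lam i * (v i / vstar) = 1 := by
      rw [show (∑ i, lam i * (v i / vstar)) = (∑ i, lam i * v i) / vstar by
        rw [Finset.sum_div]; exact Finset.sum_congr rfl fun i _ => by ring]
      rw [hveq, div_self hvs.ne']
    have e2 : ∑ i, lam i * (t i ^ α / tstar ^ α) = 1 := by
      rw [show (∑ i, lam i * (t i ^ α / tstar ^ α)) = (∑ i, lam i * t i ^ α) / tstar ^ α by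
        rw [Finset.sum_div]; exact Finset.sum_congr rfl fun i _ => by ring]
      rw [hteq, div_self hts'.ne']
    have : ∑ i, lam i * (2 * (v i / vstar) + β * (t i ^ α / tstar ^ α) + (-1 - β))
        = 2 * (∑ i, lam i * (v i / vstar)) + β * (∑ i, lam i * (t i ^ α / tstar ^ α))
          + (-1 - β) * (∑ i, lam i) := by
      rw [Finset.mul_sum, Finset.mul_sum, Finset.mul_sum, ← Finset.sum_add_distrib,
        ← Finset.sum_add_distrib]
      exact Finset.sum_congr rfl fun i _ => by ring
    rw [this, e1, e2, hsum]; ring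
  calc (1:ℝ) = ∑ i, lam i * (2 * (v i / vstar) + β * (t i ^ α / tstar ^ α) + (-1 - β)) :=
        hsum2.symm
    _ ≤ ∑ i, lam i * (v i ^ 2 / vstar ^ 2) * (t i ^ α / tstar ^ α) ^ β :=
        Finset.sum_le_sum fun i _ => key i
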